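/- arXiv:2207.06971 — 4 statements merged into one kernel-verified Lean document; each statement's English description precedes it below -/
import Mathlib

section
/- Let (X, 𝒯) be a topological space and φ a semiflow on X such that each time-t map φ t : X → X is continuous. Then for every t ≥ 0 the map φ t is also continuous with respect to the block-flow topology; concretely, if U ⊆ X is block-flow closed (i.e. (φ s)⁻¹(cl U) ⊆ U for all s > 0), then (φ t)⁻¹ U is block-flow closed. -/
/-- If each time-`t` map of a semiflow is continuous, then each `φ t`
is continuous for the block-flow topology: preimages of block-flow closed sets are
block-flow closed. -/
theorem time_t_map_block_flow_continuous {X : Type*} [TopologicalSpace X]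
    (φ : NNReal → X → X) (hφ0 : φ 0 = id)
    (hφadd : ∀ s t : NNReal, φ (s + t) = φ s ∘ φ t)
    (hcont : ∀ t : NNReal, Continuous (φ t))
    (U : Set X) (hU : ∀ s : NNReal, 0 < s → φ s ⁻¹' closure U ⊆ U) :
    ∀ t : NNReal, ∀ s : NNReal, 0 < s → φ s ⁻¹' closure (φ t ⁻¹' U) ⊆ φ t ⁻¹' U := by
  intro t s hs x hx
  have h1 : closure (φ t ⁻¹' U) ⊆ φ t ⁻¹' closure U :=
    Continuous.closure_preimage_subset (hcont t) U
  have h2 : φ t (φ s x) ∈ closure U := h1 hx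
  have h3 : φ s (φ t x) ∈ closure U := by
    have := congrFun (hφadd t s) x
    have := congrFun (hφadd s t) x
    have hcomm : φ t (φ s x) = φ s (φ t x) := by
      have e1 := congrFun (hφadd t s) x
      have e2 := congrFun (hφadd s t) x
      simp only [Function.comp] at e1 e2
      rw [← e1, ← e2, add_comm]
    rwa [← hcomm]
  exact hU s hs h3
end

section
/- Let (X, 𝒯) be a topological space and φ a semiflow on X such that for every x ∈ X, the map t ↦ φ t x is continuous at t = 0 (i.e. φ(t_n, x) → x whenever t_n → 0⁺). If U is a closed attracting block, i.e. U is closed and φ t '' U ⊆ Int U for all t > 0, then U is regular closed: cl (Int U) = U. -/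
/-- If `t ↦ φ t x` is continuous at `t = 0` for each `x`, then every
closed attracting block is regular closed: `cl (Int U) = U`. -/
theorem closed_attracting_block_is_regular_closed {X : Type*} [TopologicalSpace X]
    (φ : NNReal → X → X) (hφ0 : φ 0 = id)
    (hφadd : ∀ s t : NNReal, φ (s + t) = φ s ∘ φ t)
    (hcont0 : ∀ x : X, Filter.Tendsto (fun t : NNReal => φ t x) (nhds 0) (nhds x))
    (U : Set X) (hUclosed : IsClosed U)
    (hUattr : ∀ t : NNReal, 0 < t → φ t '' U ⊆ interior U) :
    closure (interior U) = U := by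
  apply Set.Subset.antisymm
  · calc closure (interior U) ⊆ closure U := closure_mono interior_subset
    _ = U := hUclosed.closure_eq
  · intro x hx
    have h : Filter.Tendsto (fun t : NNReal => φ t x) (nhdsWithin 0 (Set.Ioi 0)) (nhds x) :=
      (hcont0 x).mono_left nhdsWithin_le_nhds
    exact mem_closure_of_tendsto h (Filter.eventually_of_mem self_mem_nhdsWithin
      fun t ht => hUattr t ht ⟨x, hx, rfl⟩)
end

section
/- Let (X, 𝒯) be a topological space and φ a semiflow on X such that t ↦ φ t x is continuous at t = 0 for each x ∈ X. If U and V are closed attracting blocks (closed sets with φ t '' W ⊆ Int W for all t > 0, W ∈ {U, V}), then U ∩ V is a closed attracting block and moreover U ∩ V equals the regular-closed meet: U ∩ V = cl (Int (U ∩ V)). -/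
/-- The intersection of two closed attracting blocks is a closed
attracting block and equals the regular-closed meet `cl (Int (U ∩ V))`. -/
theorem inter_closed_attracting_blocks {X : Type*} [TopologicalSpace X]
    (φ : NNReal → X → X) (hφ0 : φ 0 = id)
    (hφadd : ∀ s t : NNReal, φ (s + t) = φ s ∘ φ t)
    (hcont0 : ∀ x : X, Filter.Tendsto (fun t : NNReal => φ t x) (nhds 0) (nhds x))
    (U V : Set X)
    (hUclosed : IsClosed U) (hUattr : ∀ t : NNReal, 0 < t → φ t '' U ⊆ interior U)
    (hVclosed : IsClosed V) (hVattr : ∀ t : NNReal, 0 < t → φ t '' V ⊆ interior V) :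
    (IsClosed (U ∩ V) ∧ ∀ t : NNReal, 0 < t → φ t '' (U ∩ V) ⊆ interior (U ∩ V)) ∧
      U ∩ V = closure (interior (U ∩ V)) := by
  have hattr : ∀ t : NNReal, 0 < t → φ t '' (U ∩ V) ⊆ interior (U ∩ V) := by
    intro t ht
    rw [interior_inter]
    rintro y ⟨x, ⟨hxU, hxV⟩, rfl⟩
    exact ⟨hUattr t ht ⟨x, hxU, rfl⟩, hVattr t ht ⟨x, hxV, rfl⟩⟩
  refine ⟨⟨hUclosed.inter hVclosed, hattr⟩, ?_⟩
  apply Set.Subset.antisymm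
  · intro x hx
    have h1 : Filter.Tendsto (fun t : NNReal => φ t x) (nhdsWithin 0 (Set.Ioi 0))
        (nhds x) := (hcont0 x).mono_left nhdsWithin_le_nhds
    have h2 : ∀ᶠ t in nhdsWithin (0 : NNReal) (Set.Ioi 0),
        φ t x ∈ interior (U ∩ V) :=
      Filter.eventually_of_mem self_mem_nhdsWithin
        (fun t ht => hattr t ht ⟨x, hx, rfl⟩)
    exact mem_closure_of_tendsto h1 h2
  · exact closure_minimal interior_subset (hUclosed.inter hVclosed)
end

section
/- Let X be a finite topological space whose specialization order is a partial order (a finite T0 space), and let X^top be the set of maximal points (points ξ with {ξ} open). Then: (1) for each ξ ∈ X^top, cl {ξ} is regular closed; (2) every regular closed subset of X is a union of sets cl {ξ} with ξ ∈ X^top; (3) the map A ↦ cl A from subsets of X^top to regular closed subsets of X is a bijection with inverse U ↦ U ∩ X^top. -/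
/-!
Every point of an open set `V` of a finite T0 space is a specialization of a point of `V` whose
singleton is open, so these open points are dense in `V`. Hence a regular closed set
`U = cl (Int U)` is the closure of its open points. Conversely, a set `A` of open points is open,
so `cl A` is regular closed, and an open point of `cl A` must already lie in `A`.
-/

open Set Topology

section General

variable {X : Type*} [TopologicalSpace X]

theorem IsOpen.closure_interior_closure_eq {A : Set X} (hA : IsOpen A) :
    closure (interior (closure A)) = closure A :=
  isClosed_closure.closure_interior_subset.antisymm (closure_mono hA.subset_interior_closure)

theorem isOpen_of_subset_setOf_isOpen_singleton {A : Set X}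
    (hA : A ⊆ {ξ | IsOpen ({ξ} : Set X)}) : IsOpen A :=
  isOpen_iff_forall_mem_open.2 fun ξ hξ => ⟨{ξ}, singleton_subset_iff.2 hξ, hA hξ, rfl⟩

theorem mem_of_mem_closure_of_isOpen_singleton {A : Set X} {η : X} (hη : IsOpen ({η} : Set X))
    (h : η ∈ closure A) : η ∈ A := by
  obtain ⟨_, rfl, hηA⟩ := mem_closure_iff.1 h {η} hη rfl
  exact hηA

theorem closure_inter_setOf_isOpen_singleton_eq {A : Set X}
    (hA : A ⊆ {ξ | IsOpen ({ξ} : Set X)}) : closure A ∩ {ξ | IsOpen ({ξ} : Set X)} = A :=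
  Subset.antisymm (fun _ ⟨hη, hηo⟩ => mem_of_mem_closure_of_isOpen_singleton hηo hη)
    fun _ hξ => ⟨subset_closure hξ, hA hξ⟩

theorem closure_eq_biUnion_closure_singleton [AlexandrovDiscrete X] (S : Set X) :
    closure S = ⋃ x ∈ S, closure ({x} : Set X) := by
  conv_lhs => rw [← biUnion_of_singleton S]
  simp only [closure_iUnion]

end General

section FiniteT0

variable {X : Type*} [TopologicalSpace X] [Finite X] [T0Space X]

/-- A maximal element above `x` in the specialization order, taken inside the open set `V`,
has an open singleton: `V` contains all its generizations. -/
theorem exists_isOpen_singleton_specializes {V : Set X} (hV : IsOpen V) {x : X} (hx : x ∈ V) :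
    ∃ ξ ∈ V, IsOpen ({ξ} : Set X) ∧ ξ ⤳ x := by
  have : Finite (Specialization X) := ‹Finite X›
  obtain ⟨ξ, hxξ, hmax⟩ :=
    Finite.exists_le_maximal (p := fun y : Specialization X => Specialization.ofEquiv y ∈ V)
      (a := Specialization.toEquiv x) hx
  refine ⟨Specialization.ofEquiv ξ, hmax.prop, ?_, hxξ⟩
  refine isOpen_iff_forall_specializes.2 fun z y hzξ hy => ?_
  rw [mem_singleton_iff] at hy ⊢
  subst hy
  have hzV : z ∈ V := (specializes_iff_forall_open.1 hzξ) V hV hmax.prop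
  exact congrArg Specialization.ofEquiv (hmax.eq_of_ge (y := Specialization.toEquiv z) hzV hzξ)

theorem IsOpen.subset_closure_inter_setOf_isOpen_singleton {V : Set X} (hV : IsOpen V) :
    V ⊆ closure (V ∩ {ξ | IsOpen ({ξ} : Set X)}) := fun x hx => by
  obtain ⟨ξ, hξV, hξ, hξx⟩ := exists_isOpen_singleton_specializes hV hx
  exact closure_mono (singleton_subset_iff.2 (mem_inter hξV hξ))
    (specializes_iff_mem_closure.1 hξx)

theorem closure_inter_setOf_isOpen_singleton_of_closure_interior_eq {U : Set X}
    (hU : closure (interior U) = U) : closure (U ∩ {ξ | IsOpen ({ξ} : Set X)}) = U := by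
  refine Subset.antisymm (closure_minimal inter_subset_left (hU ▸ isClosed_closure)) ?_
  calc U = closure (interior U) := hU.symm
    _ ⊆ closure (interior U ∩ {ξ | IsOpen ({ξ} : Set X)}) :=
      closure_minimal isOpen_interior.subset_closure_inter_setOf_isOpen_singleton isClosed_closure
    _ ⊆ closure (U ∩ {ξ | IsOpen ({ξ} : Set X)}) :=
      closure_mono (inter_subset_inter_left _ interior_subset)

end FiniteT0

/-- In a finite T0 space, with `Xtop` the set of points whose
singleton is open: (1) `cl {ξ}` is regular closed for `ξ ∈ Xtop`; (2) every
regular closed set is the union of the `cl {ξ}` over its top points; (3) the map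
`A ↦ cl A` from subsets of `Xtop` to regular closed sets is a bijection with
inverse `U ↦ U ∩ Xtop`. -/
theorem regular_closed_sets_of_finite_T0 {X : Type*} [TopologicalSpace X]
    [Finite X] [T0Space X] (Xtop : Set X)
    (hXtop : ∀ ξ : X, ξ ∈ Xtop ↔ IsOpen ({ξ} : Set X)) :
    (∀ ξ ∈ Xtop, closure (interior (closure ({ξ} : Set X))) = closure ({ξ} : Set X)) ∧
    (∀ U : Set X, closure (interior U) = U →
      U = ⋃ ξ ∈ U ∩ Xtop, closure ({ξ} : Set X)) ∧
    (∀ A : Set X, A ⊆ Xtop →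
      closure (interior (closure A)) = closure A ∧ closure A ∩ Xtop = A) ∧
    (∀ U : Set X, closure (interior U) = U → closure (U ∩ Xtop) = U) := by
  obtain rfl : Xtop = {ξ | IsOpen ({ξ} : Set X)} := Set.ext hXtop
  have closure_top_eq {U : Set X} (hU : closure (interior U) = U) :
      closure (U ∩ {ξ | IsOpen ({ξ} : Set X)}) = U :=
    closure_inter_setOf_isOpen_singleton_of_closure_interior_eq hU
  refine ⟨fun ξ hξ => IsOpen.closure_interior_closure_eq hξ, fun U hU => ?_, fun A hA => ?_,
    fun U hU => closure_top_eq hU⟩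
  · rw [← closure_eq_biUnion_closure_singleton, closure_top_eq hU]
  · exact ⟨(isOpen_of_subset_setOf_isOpen_singleton hA).closure_interior_closure_eq,
      closure_inter_setOf_isOpen_singleton_eq hA⟩
end
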